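/- arXiv:2203.11395 — 3 statements merged into one kernel-verified Lean document; each statement's English description precedes it below -/
import Mathlib

section
/- Let D ⊆ ℝ² be a Borel measurable convex set, let x ∈ ℝ² with x ∉ D, let r > 0, and let b be an admissible radial kernel of radius r. Then ∫_{ℝ²} b(x − y) 1_D(y) dy ≤ 1/2. -/
/-!
Separate `x` from the interior of `D` by a nonzero linear functional `f`. Since the frontier of a
convex set is Lebesgue-null, `D` lies almost everywhere in the half-plane `{y | f y ≤ f x}`, so the
convolution is at most the mass of `b (x - ·)` on that half-plane. The kernel is even and the line
`{f = 0}` is null, so this mass is exactly half of `∫ b = 1`.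
-/

noncomputable section

open MeasureTheory

local notation "ℝ²" => EuclideanSpace ℝ (Fin 2)

/-- An admissible radial kernel of radius `r`: nonnegative, radial (of the form
`ρ ∘ ‖·‖` for measurable `ρ`), vanishing for `‖y‖ ≥ r`, with total integral 1. -/
def IsAdmissibleRadialKernel (r : ℝ) (b : ℝ² → ℝ) : Prop :=
  (∀ y, 0 ≤ b y) ∧
  (∃ ρ : ℝ → ℝ, Measurable ρ ∧ (∀ s, 0 ≤ s → 0 ≤ ρ s) ∧ ∀ y, b y = ρ ‖y‖) ∧
  (∀ y, r ≤ ‖y‖ → b y = 0) ∧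
  (∫ y, b y = 1)

open Measure

section Separation

variable {E : Type*} [TopologicalSpace E] [AddCommGroup E] [Module ℝ E] [IsTopologicalAddGroup E]
  [ContinuousSMul ℝ E] [Nontrivial E] [SeparatingDual ℝ E]

theorem Convex.exists_ne_zero_forall_lt_of_isOpen {s : Set E} (hs : Convex ℝ s) (hso : IsOpen s)
    {x : E} (hx : x ∉ s) : ∃ f : StrongDual ℝ E, f ≠ 0 ∧ ∀ a ∈ s, f a < f x := by
  rcases s.eq_empty_or_nonempty with rfl | ⟨a, ha⟩
  · obtain ⟨v, hv⟩ := exists_ne (0 : E)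
    obtain ⟨f, hf⟩ := SeparatingDual.exists_ne_zero (R := ℝ) hv
    exact ⟨f, fun h => hf (by simp [h]), by simp⟩
  · obtain ⟨f, hf⟩ := geometric_hahn_banach_open_point hs hso hx
    refine ⟨f, fun h => ?_, hf⟩
    simpa [h] using hf a ha

end Separation

section HalfSpace

variable {E : Type*} [NormedAddCommGroup E] [NormedSpace ℝ E] [FiniteDimensional ℝ E]
  [MeasurableSpace E] [BorelSpace E] (μ : Measure E) [μ.IsAddHaarMeasure]

theorem Convex.exists_ne_zero_ae_le_halfSpace [Nontrivial E] {s : Set E} (hs : Convex ℝ s)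
    {x : E} (hx : x ∉ s) : ∃ f : StrongDual ℝ E, f ≠ 0 ∧ s ≤ᵐ[μ] {y | f y ≤ f x} := by
  obtain ⟨f, hf, hlt⟩ := hs.interior.exists_ne_zero_forall_lt_of_isOpen isOpen_interior
    fun h => hx (interior_subset h)
  exact ⟨f, hf, (interior_ae_eq_of_null_frontier (hs.addHaar_frontier μ)).symm.le.trans
    (LE.le.eventuallyLE fun a ha => (hlt a ha).le)⟩

theorem setIntegral_halfSpace_eq_half_integral {b : E → ℝ} (hb : Integrable b μ)
    (heven : ∀ z, b (-z) = b z) {f : StrongDual ℝ E} (hf : f ≠ 0) :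
    ∫ z in {z | 0 ≤ f z}, b z ∂μ = (∫ z, b z ∂μ) / 2 := by
  have hker : μ {z | f z = 0} = 0 :=
    addHaar_submodule μ (LinearMap.ker (f : E →ₗ[ℝ] ℝ))
      (by rwa [Ne, LinearMap.ker_eq_top, ← ContinuousLinearMap.toLinearMap_zero,
        ContinuousLinearMap.coe_inj])
  have hsymm : ∫ z in {z | 0 ≤ f z}, b z ∂μ = ∫ z in {z | f z ≤ 0}, b z ∂μ := by
    rw [← (measurePreserving_neg μ).setIntegral_preimage_emb
      (MeasurableEquiv.neg E).measurableEmbedding b {z | 0 ≤ f z}]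
    simp [heven]
  have hboundary : ∫ z in {z | f z ≤ 0}, b z ∂μ = ∫ z in {z | 0 ≤ f z}ᶜ, b z ∂μ := by
    refine setIntegral_congr_set ?_
    filter_upwards [measure_eq_zero_iff_ae_notMem.1 hker] with z hz
    change (f z ≤ 0) = ¬(0 ≤ f z)
    simp [le_iff_lt_or_eq, Ne.symm hz]
  have hsplit : ∫ z in {z | 0 ≤ f z}, b z ∂μ + ∫ z in {z | 0 ≤ f z}ᶜ, b z ∂μ = ∫ z, b z ∂μ :=
    integral_add_compl (measurableSet_le measurable_const f.measurable) hb
  linarith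

theorem setIntegral_halfSpace_sub_left (g : E → ℝ) (f : StrongDual ℝ E) (x : E) :
    ∫ y in {y | f y ≤ f x}, g (x - y) ∂μ = ∫ z in {z | 0 ≤ f z}, g z ∂μ := by
  rw [← (measurePreserving_sub_left μ x).setIntegral_preimage_emb
    (MeasurableEquiv.subLeft x).measurableEmbedding g]
  congr with y
  simp [sub_nonneg]

end HalfSpace

namespace IsAdmissibleRadialKernel

variable {r : ℝ} {b : ℝ² → ℝ}

theorem integrable (hb : IsAdmissibleRadialKernel r b) : Integrable b :=
  Integrable.of_integral_ne_zero (by simp [hb.2.2.2])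

theorem apply_neg (hb : IsAdmissibleRadialKernel r b) (z : ℝ²) : b (-z) = b z := by
  obtain ⟨ρ, -, -, hρ⟩ := hb.2.1
  rw [hρ, hρ, norm_neg]

end IsAdmissibleRadialKernel

theorem convolution_le_half_of_convex_of_not_mem_general (D : Set ℝ²)
    (hDconv : Convex ℝ D)
    (x : ℝ²) (hx : x ∉ D) (r : ℝ)
    (b : ℝ² → ℝ) (hb : IsAdmissibleRadialKernel r b) :
    (∫ y, b (x - y) * D.indicator 1 y) ≤ 1 / 2 := by
  obtain ⟨f, hf, hDf⟩ := hDconv.exists_ne_zero_ae_le_halfSpace volume hx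
  calc (∫ y, b (x - y) * D.indicator 1 y) = ∫ y in D, b (x - y) := by
        rw [← integral_indicator₀ (hDconv.nullMeasurableSet volume)]
        congr with y
        by_cases hy : y ∈ D <;> simp [hy]
    _ ≤ ∫ y in {y | f y ≤ f x}, b (x - y) :=
        setIntegral_mono_set (hb.integrable.comp_sub_left x).integrableOn
          (ae_of_all _ fun y => hb.1 (x - y)) hDf
    _ = ∫ z in {z | 0 ≤ f z}, b z := setIntegral_halfSpace_sub_left volume b f x
    _ = 1 / 2 := by
        rw [setIntegral_halfSpace_eq_half_integral volume hb.integrable hb.apply_neg hf, hb.2.2.2]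

theorem convolution_le_half_of_convex_of_not_mem (D : Set ℝ²)
    (hDmeas : MeasurableSet D) (hDconv : Convex ℝ D)
    (x : ℝ²) (hx : x ∉ D) (r : ℝ) (hr : 0 < r)
    (b : ℝ² → ℝ) (hb : IsAdmissibleRadialKernel r b) :
    (∫ y, b (x - y) * D.indicator 1 y) ≤ 1 / 2 :=
  convolution_le_half_of_convex_of_not_mem_general D hDconv x hx r b hb
end
end

section
/- Let D ⊆ ℝ² be a Borel measurable convex set, let x ∈ ℝ² with x ∉ D, and let s > 0. Then the Lebesgue measure of the set {θ ∈ [0, 2π) : x + s·(cos θ, sin θ) ∈ D} is at most π; that is, the circle of radius s centered at x meets D in at most half of its angular measure. -/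
/-!
A point `x` outside a convex set `D` of a finite-dimensional space is weakly separated from it by
a nonzero continuous linear functional `f`: by Hahn–Banach when `D` has interior points, and by a
functional constant on the affine span of `D` otherwise. On the circle of radius `s` about `x`,
`f` equals `f x - s r cos (θ - φ)` with `r > 0`, so the angles landing in `D` satisfy
`cos (θ - φ) ≥ 0`. Since `θ ↦ θ + π` flips the sign of `cos (θ - φ)` and its zero set is
countable, these angles fill at most half of `[0, 2π)`.
-/

noncomputable section

open MeasureTheory Real

local notation "ℝ²" => EuclideanSpace ℝ (Fin 2)

/-- The point on the circle of radius `s` centered at `x` at angle `θ`. -/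
def circlePt (x : ℝ²) (s θ : ℝ) : ℝ² :=
  x + s • (EuclideanSpace.equiv (Fin 2) ℝ).symm ![Real.cos θ, Real.sin θ]

open Function Set

theorem re_mul_cos_add_im_mul_sin_eq_norm_mul_cos_sub_arg (z : ℂ) (θ : ℝ) :
    z.re * cos θ + z.im * sin θ = ‖z‖ * cos (θ - z.arg) := by
  rw [cos_sub, ← Complex.norm_mul_cos_arg z, ← Complex.norm_mul_sin_arg z]
  ring

theorem volume_setOf_cos_sub_eq_zero (φ : ℝ) : volume {θ : ℝ | cos (θ - φ) = 0} = 0 := by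
  refine measure_mono_null (fun θ hθ => ?_)
    ((countable_range fun k : ℤ => φ + (2 * k + 1) * π / 2).measure_zero volume)
  obtain ⟨k, hk⟩ := cos_eq_zero_iff.mp hθ
  exact ⟨k, by linarith⟩

theorem volume_Ico_inter_setOf_nonneg_le_of_antiperiodic {g : ℝ → ℝ} {c : ℝ}
    (hg : Antiperiodic g c) (hgm : Measurable g) (hnull : volume {θ | g θ = 0} = 0) :
    volume (Ico 0 (2 * c) ∩ {θ | 0 ≤ g θ}) ≤ ENNReal.ofReal c := by
  set I := Ico c (2 * c)
  have hsplit : Ico 0 (2 * c) ∩ {θ | 0 ≤ g θ}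
      ⊆ (Ico 0 c ∩ {θ | 0 < g θ}) ∪ (I ∩ {θ | 0 < g θ}) ∪ {θ | g θ = 0} := by
    rintro θ ⟨⟨h0, h2⟩, hge : 0 ≤ g θ⟩
    rcases hge.eq_or_lt with h | h
    · exact Or.inr h.symm
    rcases lt_or_ge θ c with hc | hc
    · exact Or.inl (Or.inl ⟨⟨h0, hc⟩, h⟩)
    · exact Or.inl (Or.inr ⟨⟨hc, h2⟩, h⟩)
  have hshift : Ico 0 c ∩ {θ | 0 < g θ} ⊆ (· + c) ⁻¹' (I ∩ {θ | g θ < 0}) := by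
    rintro θ ⟨⟨h0, hc⟩, h : 0 < g θ⟩
    refine ⟨⟨by linarith, by linarith⟩, ?_⟩
    show g (θ + c) < 0
    linarith [hg θ]
  have hdisj : Disjoint (I ∩ {θ | g θ < 0}) (I ∩ {θ | 0 < g θ}) := by
    rw [disjoint_left]
    rintro θ ⟨-, hneg : g θ < 0⟩ ⟨-, hpos : 0 < g θ⟩
    exact hneg.not_gt hpos
  calc volume (Ico 0 (2 * c) ∩ {θ | 0 ≤ g θ})
      ≤ volume (Ico 0 c ∩ {θ | 0 < g θ}) + volume (I ∩ {θ | 0 < g θ}) := by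
        refine (measure_mono hsplit).trans <| (measure_union_le _ _).trans ?_
        rw [hnull, add_zero]
        exact measure_union_le _ _
    _ ≤ volume (I ∩ {θ | g θ < 0}) + volume (I ∩ {θ | 0 < g θ}) := by
        gcongr ?_ + _
        exact (measure_mono hshift).trans_eq (measure_preimage_add_right volume c _)
    _ = volume ((I ∩ {θ | g θ < 0}) ∪ (I ∩ {θ | 0 < g θ})) :=
        (measure_union hdisj (measurableSet_Ico.inter (measurableSet_lt measurable_const hgm))).symm
    _ ≤ volume I := measure_mono (union_subset inter_subset_left inter_subset_left)
    _ = ENNReal.ofReal c := by rw [Real.volume_Ico, two_mul, add_sub_cancel_right]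

theorem volume_Ico_inter_setOf_cos_sub_nonneg_le (φ : ℝ) :
    volume (Ico 0 (2 * π) ∩ {θ | 0 ≤ cos (θ - φ)}) ≤ ENNReal.ofReal π :=
  volume_Ico_inter_setOf_nonneg_le_of_antiperiodic (cos_antiperiodic.sub_const φ)
    (by fun_prop) (volume_setOf_cos_sub_eq_zero φ)

section Separation

variable {E : Type*} [NormedAddCommGroup E] [NormedSpace ℝ E] [FiniteDimensional ℝ E]
  {D : Set E}

theorem Convex.exists_ne_zero_forall_eq_of_interior_eq_empty (hD : Convex ℝ D)
    (hint : interior D = ∅) {p : E} (hp : p ∈ D) :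
    ∃ f : StrongDual ℝ E, f ≠ 0 ∧ ∀ y ∈ D, f y = f p := by
  have hdir : (affineSpan ℝ D).direction < ⊤ := by
    rw [lt_top_iff_ne_top, Ne,
      AffineSubspace.direction_eq_top_iff_of_nonempty ⟨p, subset_affineSpan ℝ D hp⟩,
      ← hD.interior_nonempty_iff_affineSpan_eq_top, hint]
    exact not_nonempty_empty
  obtain ⟨φ, hφ0, hφ⟩ := Submodule.exists_le_ker_of_lt_top _ hdir
  refine ⟨LinearMap.toContinuousLinearMap φ, by simpa using hφ0, fun y hy => ?_⟩
  have := hφ (AffineSubspace.vsub_mem_direction (subset_affineSpan ℝ D hy)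
    (subset_affineSpan ℝ D hp))
  simpa [sub_eq_zero] using this

theorem Convex.exists_ne_zero_forall_le_of_notMem (hD : Convex ℝ D) (hne : D.Nonempty)
    {x : E} (hx : x ∉ D) : ∃ f : StrongDual ℝ E, f ≠ 0 ∧ ∀ y ∈ D, f y ≤ f x := by
  rcases (interior D).eq_empty_or_nonempty with hint | hint
  · obtain ⟨p, hp⟩ := hne
    obtain ⟨f, hf0, hf⟩ := hD.exists_ne_zero_forall_eq_of_interior_eq_empty hint hp
    rcases le_total (f p) (f x) with hpx | hxp
    · exact ⟨f, hf0, fun y hy => (hf y hy).trans_le hpx⟩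
    · exact ⟨-f, neg_ne_zero.mpr hf0, fun y hy => by simp [hf y hy, hxp]⟩
  · exact geometric_hahn_banach_of_nonempty_interior_point hD (fun h => hx (interior_subset h))
      hint

end Separation

theorem strongDual_apply_eq_fin_two (f : StrongDual ℝ ℝ²) (v : ℝ²) :
    f v = v 0 * f (EuclideanSpace.single 0 1) + v 1 * f (EuclideanSpace.single 1 1) := by
  have hv : v = v 0 • EuclideanSpace.single 0 1 + v 1 • EuclideanSpace.single 1 1 := by
    ext i; fin_cases i <;> simp
  conv_lhs => rw [hv]
  simp only [map_add, map_smul, smul_eq_mul]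

theorem StrongDual.exists_apply_circlePt_eq {f : StrongDual ℝ ℝ²} (hf : f ≠ 0) :
    ∃ r > 0, ∃ φ : ℝ, ∀ x s θ, f (circlePt x s θ) = f x - s * r * cos (θ - φ) := by
  set z : ℂ := ⟨-f (EuclideanSpace.single 0 1), -f (EuclideanSpace.single 1 1)⟩
  refine ⟨‖z‖, norm_pos_iff.mpr fun hz => hf (ContinuousLinearMap.ext fun v => ?_), z.arg,
    fun x s θ => ?_⟩
  · have h0 : f (EuclideanSpace.single 0 1) = 0 := by simpa [z] using congrArg Complex.re hz
    have h1 : f (EuclideanSpace.single 1 1) = 0 := by simpa [z] using congrArg Complex.im hz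
    simp [strongDual_apply_eq_fin_two f v, h0, h1]
  · rw [mul_assoc, ← re_mul_cos_add_im_mul_sin_eq_norm_mul_cos_sub_arg, circlePt, map_add,
      map_smul, strongDual_apply_eq_fin_two f ((EuclideanSpace.equiv (Fin 2) ℝ).symm _)]
    simp [z]
    ring

theorem circle_angular_measure_le_pi_of_convex_of_not_mem_general (D : Set ℝ²)
    (hDconv : Convex ℝ D)
    (x : ℝ²) (hx : x ∉ D) (s : ℝ) (hs : 0 < s) :
    volume {θ : ℝ | θ ∈ Set.Ico 0 (2 * π) ∧ circlePt x s θ ∈ D}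
      ≤ ENNReal.ofReal π := by
  rcases D.eq_empty_or_nonempty with rfl | hne
  · simp
  obtain ⟨f, hf0, hf⟩ := hDconv.exists_ne_zero_forall_le_of_notMem hne hx
  obtain ⟨r, hr, φ, hfcircle⟩ := StrongDual.exists_apply_circlePt_eq hf0
  have hsub : {θ : ℝ | θ ∈ Set.Ico 0 (2 * π) ∧ circlePt x s θ ∈ D}
      ⊆ Ico 0 (2 * π) ∩ {θ | 0 ≤ cos (θ - φ)} := by
    rintro θ ⟨hθ, hθD⟩
    have h := hfcircle x s θ ▸ hf _ hθD
    exact ⟨hθ, nonneg_of_mul_nonneg_right (by linarith) (mul_pos hs hr)⟩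
  exact (measure_mono hsub).trans (volume_Ico_inter_setOf_cos_sub_nonneg_le φ)

theorem circle_angular_measure_le_pi_of_convex_of_not_mem (D : Set ℝ²)
    (hDmeas : MeasurableSet D) (hDconv : Convex ℝ D)
    (x : ℝ²) (hx : x ∉ D) (s : ℝ) (hs : 0 < s) :
    volume {θ : ℝ | θ ∈ Set.Ico 0 (2 * π) ∧ circlePt x s θ ∈ D}
      ≤ ENNReal.ofReal π :=
  circle_angular_measure_le_pi_of_convex_of_not_mem_general D hDconv x hx s hs
end
end

section
/- Let D ⊆ ℝ² be a Borel measurable set, x ∈ ℝ², and r > 0. Then the following are equivalent: (a) for every admissible radial kernel b of radius r, ∫_{ℝ²} b(x − y) 1_D(y) dy ≤ 1/2; (b) for almost every s ∈ (0, r), the Lebesgue measure of {θ ∈ [0, 2π) : x + s·(cos θ, sin θ) ∈ D} is at most π. -/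
noncomputable section

open MeasureTheory Real

local notation "ℝ²" => EuclideanSpace ℝ (Fin 2)

/-!
In polar coordinates about `x`, the convolution of a radial kernel `b = ρ ∘ ‖·‖` with `1_D` is
`∫₀^∞ s ρ(s) a(s) ds`, where `a(s)` is the angular measure of `D` on the circle of radius `s`,
and the normalisation of `b` reads `∫₀^∞ s ρ(s) 2π ds = 1`. Hence `a ≤ π` a.e. on `(0, r)` bounds
the convolution by `1/2`. Conversely, if `a > π` on a set `A ⊆ (0, r)` of positive measure, the
kernel with `s ρ(s)` constant on `A` and zero elsewhere has convolution larger than `1/2`.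
-/

open Set ENNReal

theorem circlePt_eq_add_repr_polarCoord_symm (x : ℝ²) (p : ℝ × ℝ) :
    circlePt x p.1 p.2 = x + Complex.orthonormalBasisOneI.repr (Complex.polarCoord.symm p) := by
  ext i; fin_cases i <;> simp [circlePt, Complex.cos_ofReal_re, Complex.sin_ofReal_re]

theorem continuous_circlePt (x : ℝ²) : Continuous fun p : ℝ × ℝ => circlePt x p.1 p.2 := by
  simp only [circlePt_eq_add_repr_polarCoord_symm, Complex.polarCoord_symm_apply]
  fun_prop

theorem circlePt_add_two_pi (x : ℝ²) (s θ : ℝ) : circlePt x s (θ + 2 * π) = circlePt x s θ := by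
  simp [circlePt]

theorem norm_circlePt_sub (x : ℝ²) (s θ : ℝ) : ‖circlePt x s θ - x‖ = |s| := by
  simp [circlePt_eq_add_repr_polarCoord_symm x (s, θ)]

theorem Function.Periodic.setLIntegral_Ioc_eq {f : ℝ → ℝ≥0∞} {T : ℝ} (hf : f.Periodic T)
    (hT : 0 < T) (t u : ℝ) :
    ∫⁻ θ in Ioc t (t + T), f θ = ∫⁻ θ in Ioc u (u + T), f θ :=
  (isAddFundamentalDomain_Ioc hT t).setLIntegral_eq (isAddFundamentalDomain_Ioc hT u) f
    fun ⟨_, n, rfl⟩ θ => by simpa [add_comm] using hf.zsmul n θ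

theorem lintegral_eq_lintegral_circlePt (x : ℝ²) {g : ℝ² → ℝ≥0∞} (hg : Measurable g) :
    ∫⁻ y, g y = ∫⁻ s in Ioi 0, ENNReal.ofReal s * ∫⁻ θ in Ico 0 (2 * π), g (circlePt x s θ) := by
  have hmeas : Measurable fun p : ℝ × ℝ => g (circlePt x p.1 p.2) :=
    hg.comp (continuous_circlePt x).measurable
  calc ∫⁻ y, g y = ∫⁻ y, g (x + y) := (lintegral_add_left_eq_self g x).symm
    _ = ∫⁻ z : ℂ, g (x + Complex.orthonormalBasisOneI.repr z) :=
      (Complex.orthonormalBasisOneI.measurePreserving_repr.lintegral_comp_emb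
        Complex.orthonormalBasisOneI.repr.toHomeomorph.measurableEmbedding _).symm
    _ = ∫⁻ p in Ioi 0 ×ˢ Ioo (-π) π, ENNReal.ofReal p.1 * g (circlePt x p.1 p.2) := by
      simp only [← Complex.lintegral_comp_polarCoord_symm, circlePt_eq_add_repr_polarCoord_symm,
        smul_eq_mul]
      rfl
    _ = ∫⁻ s in Ioi 0, ∫⁻ θ in Ioo (-π) π, ENNReal.ofReal s * g (circlePt x s θ) := by
      rw [Measure.volume_eq_prod, ← Measure.prod_restrict, lintegral_prod
        (fun p : ℝ × ℝ => ENNReal.ofReal p.1 * g (circlePt x p.1 p.2))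
        (measurable_fst.ennreal_ofReal.mul hmeas).aemeasurable]
    _ = ∫⁻ s in Ioi 0, ENNReal.ofReal s * ∫⁻ θ in Ico 0 (2 * π), g (circlePt x s θ) := by
      -- `polarCoord` takes angles in `(-π, π)`; periodicity moves them to `[0, 2π)`.
      refine lintegral_congr fun s => ?_
      have hper : Function.Periodic (fun θ => g (circlePt x s θ)) (2 * π) := fun θ => by
        simp only [circlePt_add_two_pi]
      rw [lintegral_const_mul' _ _ ofReal_ne_top, Measure.restrict_congr_set Ioo_ae_eq_Ioc,
        Measure.restrict_congr_set Ico_ae_eq_Ioc, ← zero_add (2 * π),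
        ← hper.setLIntegral_Ioc_eq two_pi_pos (-π) 0, neg_add_eq_sub, two_mul, add_sub_cancel_right]

def arcMeasure (D : Set ℝ²) (x : ℝ²) (s : ℝ) : ℝ≥0∞ :=
  volume {θ : ℝ | θ ∈ Ico 0 (2 * π) ∧ circlePt x s θ ∈ D}

theorem arcMeasure_le (D : Set ℝ²) (x : ℝ²) (s : ℝ) : arcMeasure D x s ≤ ENNReal.ofReal (2 * π) :=
  (measure_mono fun _ hθ => hθ.1).trans_eq (by rw [Real.volume_Ico, sub_zero])

theorem arcMeasure_univ (x : ℝ²) (s : ℝ) : arcMeasure univ x s = ENNReal.ofReal (2 * π) := by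
  simp only [arcMeasure, mem_univ, and_true, ofPred_mem_eq, Real.volume_Ico, sub_zero]

theorem measurable_arcMeasure {D : Set ℝ²} (hD : MeasurableSet D) (x : ℝ²) :
    Measurable (arcMeasure D x) :=
  measurable_measure_prodMk_left <|
    (measurable_snd measurableSet_Ico).inter ((continuous_circlePt x).measurable hD)

theorem lintegral_radial_mul_indicator {D : Set ℝ²} (hD : MeasurableSet D) (x : ℝ²)
    {f : ℝ → ℝ≥0∞} (hf : Measurable f) :
    ∫⁻ y, f ‖x - y‖ * D.indicator 1 y =
      ∫⁻ s in Ioi 0, ENNReal.ofReal s * f s * arcMeasure D x s := by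
  rw [lintegral_eq_lintegral_circlePt (g := fun y => f ‖x - y‖ * D.indicator 1 y) x
    ((hf.comp (measurable_const.sub measurable_id).norm).mul (measurable_one.indicator hD))]
  refine setLIntegral_congr_fun measurableSet_Ioi fun s (hs : 0 < s) => ?_
  have hslice : MeasurableSet (circlePt x s ⁻¹' D) :=
    (continuous_circlePt x).measurable.comp measurable_prodMk_left hD
  simp_rw [norm_sub_rev x, norm_circlePt_sub, abs_of_pos hs,
    ← indicator_comp_right (circlePt x s) (g := (1 : ℝ² → ℝ≥0∞)), Pi.one_comp]
  rw [mul_assoc, lintegral_const_mul _ (measurable_one.indicator hslice),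
    lintegral_indicator_one hslice, Measure.restrict_apply hslice, inter_comm]
  rfl

theorem integral_radial_mul_indicator {D : Set ℝ²} (hD : MeasurableSet D) (x : ℝ²)
    {ρ : ℝ → ℝ} (hρm : Measurable ρ) (hρ : ∀ s, 0 ≤ s → 0 ≤ ρ s) :
    ∫ y, ρ ‖x - y‖ * D.indicator 1 y =
      (∫⁻ s in Ioi 0, ENNReal.ofReal s * ENNReal.ofReal (ρ s) * arcMeasure D x s).toReal := by
  have hnn (y : ℝ²) : 0 ≤ ρ ‖x - y‖ := hρ _ (norm_nonneg _)
  rw [integral_eq_lintegral_of_nonneg_ae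
      (ae_of_all _ fun y =>
        mul_nonneg (hnn y) (indicator_nonneg (f := 1) (fun _ _ => zero_le_one) y))
      ((hρm.comp (measurable_const.sub measurable_id).norm).mul
        (measurable_one.indicator hD)).aestronglyMeasurable,
    ← lintegral_radial_mul_indicator hD x hρm.ennreal_ofReal]
  congr 1
  refine lintegral_congr fun y => ?_
  rw [ENNReal.ofReal_mul (hnn y)]
  by_cases hy : y ∈ D <;> simp [hy]

theorem integral_radial {ρ : ℝ → ℝ} (hρm : Measurable ρ) (hρ : ∀ s, 0 ≤ s → 0 ≤ ρ s) :
    ∫ y : ℝ², ρ ‖y‖ =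
      (∫⁻ s in Ioi 0, ENNReal.ofReal s * ENNReal.ofReal (ρ s) * ENNReal.ofReal (2 * π)).toReal := by
  simpa [arcMeasure_univ] using integral_radial_mul_indicator MeasurableSet.univ 0 hρm hρ

theorem two_mul_setLIntegral_arcMeasure_le {D : Set ℝ²} {x : ℝ²} {r : ℝ} {w : ℝ → ℝ≥0∞}
    (hw : ∀ s, 0 < s → r ≤ s → w s = 0)
    (hae : ∀ᵐ s ∂(volume.restrict (Ioo 0 r)), arcMeasure D x s ≤ ENNReal.ofReal π) :
    2 * ∫⁻ s in Ioi 0, w s * arcMeasure D x s ≤ ∫⁻ s in Ioi 0, w s * ENNReal.ofReal (2 * π) := by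
  rw [← lintegral_const_mul' _ _ ofNat_ne_top]
  refine lintegral_mono_ae ?_
  filter_upwards [ae_restrict_mem measurableSet_Ioi,
    ae_restrict_of_ae ((ae_restrict_iff' measurableSet_Ioo).mp hae)] with s (hs : 0 < s) hπ
  rcases lt_or_ge s r with hsr | hsr
  · calc 2 * (w s * arcMeasure D x s) ≤ 2 * (w s * ENNReal.ofReal π) := by
          gcongr; exact hπ ⟨hs, hsr⟩
      _ = w s * ENNReal.ofReal (2 * π) := by
          rw [ENNReal.ofReal_mul zero_le_two, ofReal_ofNat]; ring
  · simp [hw s hs hsr]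

theorem integral_radial_mul_indicator_le_half {D : Set ℝ²} (hD : MeasurableSet D) (x : ℝ²)
    {r : ℝ} {ρ : ℝ → ℝ} (hρm : Measurable ρ) (hρ : ∀ s, 0 ≤ s → 0 ≤ ρ s)
    (hvan : ∀ y : ℝ², r ≤ ‖y‖ → ρ ‖y‖ = 0) (hint : ∫ y : ℝ², ρ ‖y‖ = 1)
    (hae : ∀ᵐ s ∂(volume.restrict (Ioo 0 r)), arcMeasure D x s ≤ ENNReal.ofReal π) :
    ∫ y, ρ ‖x - y‖ * D.indicator 1 y ≤ 1 / 2 := by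
  rw [integral_radial hρm hρ, ENNReal.toReal_eq_one_iff] at hint
  have hweight (s : ℝ) (hs : 0 < s) (hsr : r ≤ s) : ENNReal.ofReal s * ENNReal.ofReal (ρ s) = 0 := by
    obtain ⟨y, rfl⟩ := exists_norm_eq ℝ² hs.le
    simp [hvan y hsr]
  have hhalf := two_mul_setLIntegral_arcMeasure_le hweight hae
  rw [hint, mul_comm, ← ENNReal.le_inv_iff_mul_le] at hhalf
  rw [integral_radial_mul_indicator hD x hρm hρ]
  simpa using ENNReal.toReal_mono (by simp) hhalf

/-- `s * annulusProfile A s` is constant on `A`: in polar coordinates the kernel spreads its unit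
mass uniformly over the radii in `A`. -/
def annulusProfile (A : Set ℝ) : ℝ → ℝ :=
  A.indicator fun s => ((ENNReal.ofReal (2 * π) * volume A)⁻¹).toReal / s

theorem measurable_annulusProfile {A : Set ℝ} (hA : MeasurableSet A) :
    Measurable (annulusProfile A) :=
  (measurable_const.div measurable_id).indicator hA

theorem annulusProfile_nonneg {A : Set ℝ} (hA : A ⊆ Ioi 0) (s : ℝ) : 0 ≤ annulusProfile A s :=
  indicator_nonneg (fun _ hs => div_nonneg toReal_nonneg (hA hs).le) s

theorem setLIntegral_ofReal_mul_annulusProfile {A : Set ℝ} (hA : MeasurableSet A)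
    (hA0 : A ⊆ Ioi 0) (hA1 : volume A ≠ 0) (G : ℝ → ℝ≥0∞) :
    ∫⁻ s in Ioi 0, ENNReal.ofReal s * ENNReal.ofReal (annulusProfile A s) * G s =
      (ENNReal.ofReal (2 * π) * volume A)⁻¹ * ∫⁻ s in A, G s := by
  set c := (ENNReal.ofReal (2 * π) * volume A)⁻¹
  have hc : c ≠ ∞ := ENNReal.inv_ne_top.2 (mul_ne_zero (ENNReal.ofReal_pos.2 two_pi_pos).ne' hA1)
  have hweight (s : ℝ) :
      ENNReal.ofReal s * ENNReal.ofReal (annulusProfile A s) = A.indicator (fun _ => c) s := by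
    by_cases hs : s ∈ A
    · rw [annulusProfile, indicator_of_mem hs, indicator_of_mem hs,
        ← ENNReal.ofReal_mul (hA0 hs).le, mul_div_cancel₀ _ (hA0 hs).ne', ofReal_toReal hc]
    · simp [annulusProfile, hs]
  simp_rw [hweight, ← indicator_mul_left]
  rw [lintegral_indicator hA, Measure.restrict_restrict hA, inter_eq_left.2 hA0,
    lintegral_const_mul' _ _ hc]

theorem isAdmissibleRadialKernel_annulusProfile {A : Set ℝ} {r : ℝ} (hA : MeasurableSet A)
    (hAr : A ⊆ Ioo 0 r) (hA1 : volume A ≠ 0) :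
    IsAdmissibleRadialKernel r fun y => annulusProfile A ‖y‖ := by
  have hA0 : A ⊆ Ioi 0 := fun s hs => (hAr hs).1
  have hnn (s : ℝ) (_ : 0 ≤ s) : 0 ≤ annulusProfile A s := annulusProfile_nonneg hA0 s
  refine ⟨fun y => hnn _ (norm_nonneg y), ⟨_, measurable_annulusProfile hA, hnn, fun _ => rfl⟩,
    fun y hy => indicator_of_notMem (fun h => (hAr h).2.not_ge hy) _, ?_⟩
  rw [integral_radial (measurable_annulusProfile hA) hnn,
    setLIntegral_ofReal_mul_annulusProfile hA hA0 hA1, setLIntegral_const,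
    ENNReal.inv_mul_cancel (mul_ne_zero (ENNReal.ofReal_pos.2 two_pi_pos).ne' hA1)
      (mul_ne_top ofReal_ne_top ((measure_mono hAr).trans_lt measure_Ioo_lt_top).ne), toReal_one]

theorem one_half_lt_toReal_inv_two_mul_mul {a b : ℝ≥0∞} (ha : a ≠ 0) (hab : a < b)
    (hb : b ≠ ∞) : 1 / 2 < ((2 * a)⁻¹ * b).toReal := by
  have hinv0 : (2 * a)⁻¹ ≠ 0 := ENNReal.inv_ne_zero.2 (mul_ne_top ofNat_ne_top hab.ne_top)
  have hinvT : (2 * a)⁻¹ ≠ ∞ := ENNReal.inv_ne_top.2 (mul_ne_zero two_ne_zero ha)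
  calc (1 : ℝ) / 2 = ((2 * a)⁻¹ * a).toReal := by
        rw [ENNReal.mul_inv (Or.inl two_ne_zero) (Or.inl ofNat_ne_top), mul_assoc,
          ENNReal.inv_mul_cancel ha hab.ne_top, mul_one, toReal_inv, toReal_ofNat, one_div]
    _ < ((2 * a)⁻¹ * b).toReal :=
        toReal_strict_mono (mul_ne_top hinvT hb) (ENNReal.mul_lt_mul_right hinv0 hinvT hab)

theorem exists_isAdmissibleRadialKernel_one_half_lt_integral {D : Set ℝ²} (hD : MeasurableSet D)
    (x : ℝ²) {r : ℝ}
    (h : ¬ ∀ᵐ s ∂(volume.restrict (Ioo 0 r)), arcMeasure D x s ≤ ENNReal.ofReal π) :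
    ∃ b, IsAdmissibleRadialKernel r b ∧ 1 / 2 < ∫ y, b (x - y) * D.indicator 1 y := by
  set A := {s | ENNReal.ofReal π < arcMeasure D x s} ∩ Ioo 0 r
  have hA : MeasurableSet A :=
    (measurable_arcMeasure hD x measurableSet_Ioi).inter measurableSet_Ioo
  have hAr : A ⊆ Ioo 0 r := inter_subset_right
  have hA0 : A ⊆ Ioi 0 := fun s hs => (hAr hs).1
  have hA1 : volume A ≠ 0 := by
    simpa only [ae_iff, not_le, Measure.restrict_apply' measurableSet_Ioo] using h
  have hAtop : volume A ≠ ∞ := ((measure_mono hAr).trans_lt measure_Ioo_lt_top).ne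
  have hlow : ENNReal.ofReal π * volume A < ∫⁻ s in A, arcMeasure D x s := by
    rw [← setLIntegral_const]
    exact setLIntegral_strict_mono hA hA1 (measurable_arcMeasure hD x)
      (by rw [setLIntegral_const]; exact mul_ne_top ofReal_ne_top hAtop)
      (ae_of_all _ fun s hs => hs.1)
  have hup : ∫⁻ s in A, arcMeasure D x s ≠ ∞ := by
    refine ne_top_of_le_ne_top (mul_ne_top (ofReal_ne_top (r := 2 * π)) hAtop) ?_
    rw [← setLIntegral_const]
    exact setLIntegral_mono' hA fun s _ => arcMeasure_le D x s
  refine ⟨_, isAdmissibleRadialKernel_annulusProfile hA hAr hA1, ?_⟩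
  rw [integral_radial_mul_indicator hD x (measurable_annulusProfile hA)
      (fun s _ => annulusProfile_nonneg hA0 s), setLIntegral_ofReal_mul_annulusProfile hA hA0 hA1,
    ENNReal.ofReal_mul zero_le_two, ofReal_ofNat, mul_assoc]
  exact one_half_lt_toReal_inv_two_mul_mul (mul_ne_zero (ENNReal.ofReal_pos.2 pi_pos).ne' hA1)
    hlow hup

theorem kernel_bound_iff_ae_circle_bound_general (D : Set ℝ²) (hDmeas : MeasurableSet D)
    (x : ℝ²) (r : ℝ) :
    (∀ b : ℝ² → ℝ, IsAdmissibleRadialKernel r b →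
        (∫ y, b (x - y) * D.indicator 1 y) ≤ 1 / 2) ↔
      (∀ᵐ s ∂(volume.restrict (Set.Ioo 0 r)),
        volume {θ : ℝ | θ ∈ Set.Ico 0 (2 * π) ∧ circlePt x s θ ∈ D}
          ≤ ENNReal.ofReal π) := by
  constructor
  · intro hker
    by_contra h
    obtain ⟨b, hb, hlt⟩ := exists_isAdmissibleRadialKernel_one_half_lt_integral hDmeas x h
    exact (hker b hb).not_gt hlt
  · rintro hae b ⟨-, ⟨ρ, hρm, hρ, hbρ⟩, hvan, hint⟩
    obtain rfl : b = fun y => ρ ‖y‖ := funext hbρ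
    exact integral_radial_mul_indicator_le_half hDmeas x hρm hρ hvan hint hae

theorem kernel_bound_iff_ae_circle_bound (D : Set ℝ²) (hDmeas : MeasurableSet D)
    (x : ℝ²) (r : ℝ) (hr : 0 < r) :
    (∀ b : ℝ² → ℝ, IsAdmissibleRadialKernel r b →
        (∫ y, b (x - y) * D.indicator 1 y) ≤ 1 / 2) ↔
      (∀ᵐ s ∂(volume.restrict (Set.Ioo 0 r)),
        volume {θ : ℝ | θ ∈ Set.Ico 0 (2 * π) ∧ circlePt x s θ ∈ D}
          ≤ ENNReal.ofReal π) :=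
  kernel_bound_iff_ae_circle_bound_general D hDmeas x r
end
end
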